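/- arXiv:2507.10387 — 2 statements merged into one kernel-verified Lean document; each statement's English description precedes it below -/
import Mathlib

section
/- Let K be a CM-field with maximal totally real subfield k and Gal(K/k) = ⟨τ⟩. Let C be a nonzero ideal of O_k, let 𝔅 be a nonzero ideal of O_K coprime to its conjugate τ(𝔅), and suppose β ∈ O_K with β·O_K = (C·O_K)·𝔅 (extension of C to O_K times 𝔅). If β/τ(β) has absolute value 1 at all archimedean places, then H(β/τ(β)) = N_{K/ℚ}(𝔅)^{1/(2N)}, where 2N = [K:ℚ]. -/
open NumberField Polynomial

variable (K : Type) [Field K] [NumberField K]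

/-- The denominator ideal of `α`: integers `x` with `x * α` integral. -/
noncomputable def denomIdeal (α : K) : Ideal (𝓞 K) where
  carrier := {x : 𝓞 K | IsIntegral ℤ ((x : K) * α)}
  add_mem' := by
    intro a b ha hb
    have h : ((a : K) + (b : K)) * α = (a : K) * α + (b : K) * α := by ring
    simpa [Set.mem_setOf_eq, h] using ha.add hb
  zero_mem' := by simpa using isIntegral_zero
  smul_mem' := by
    intro c x hx
    have h : (c : K) * (x : K) * α = (c : K) * ((x : K) * α) := by ring
    simpa [Set.mem_setOf_eq, smul_eq_mul, h] using (RingOfIntegers.isIntegral_coe c).mul hx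

/-- The absolute multiplicative Weil height of an element of the number field `K`. -/
noncomputable def mulHeight (α : K) : ℝ :=
  ((Ideal.absNorm (denomIdeal K α) : ℝ) *
      ∏ σ : K →+* ℂ, max 1 (‖σ α‖)) ^ ((Module.finrank ℚ K : ℝ)⁻¹)

/-!
Because `β / τ(β)` has absolute value `1` at every archimedean place, its height is the norm of
its denominator ideal `{x | τ(β) ∣ x β}` to the power `1 / [K : ℚ]`. Write `(β) = C 𝔅`; the
extended ideal `C` is `τ`-stable, so `(τ(β)) = C τ(𝔅)`. Cancelling `C` and using that `𝔅` is
coprime to `τ(𝔅)`, the denominator ideal is `τ(𝔅)`, whose norm is that of `𝔅`.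
-/

theorem Ideal.absNorm_map_ringEquiv {S S' : Type*} [CommRing S] [IsDedekindDomain S]
    [Module.Free ℤ S] [CommRing S'] [IsDedekindDomain S'] [Module.Free ℤ S'] (e : S ≃+* S')
    (I : Ideal S) : Ideal.absNorm (I.map (e : S →+* S')) = Ideal.absNorm I := by
  rw [Ideal.absNorm_apply, Ideal.absNorm_apply, Submodule.cardQuot_apply,
    Submodule.cardQuot_apply]
  exact (Nat.card_congr (Ideal.quotientEquiv I _ e rfl).toEquiv).symm

theorem Ideal.mul_mem_span_singleton_iff_of_isCoprime {R : Type*} [CommRing R]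
    [IsDedekindDomain R] {a b : R} {I J J' : Ideal R} (hI : I ≠ ⊥)
    (ha : Ideal.span {a} = I * J) (hb : Ideal.span {b} = I * J') (hJ : IsCoprime J' J)
    (x : R) : x * a ∈ Ideal.span {b} ↔ x ∈ J' := by
  rw [← Ideal.dvd_span_singleton, ← Ideal.span_singleton_mul_span_singleton, ha, hb,
    mul_left_comm, mul_dvd_mul_iff_left hI]
  exact ⟨fun h ↦ Ideal.dvd_span_singleton.1 (hJ.dvd_of_dvd_mul_right h),
    fun h ↦ (Ideal.dvd_span_singleton.2 h).mul_right J⟩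

theorem mem_denomIdeal_div_iff {L : Type} [Field L] {a b : 𝓞 L} (hb : b ≠ 0) (x : 𝓞 L) :
    x ∈ denomIdeal L ((a : L) / b) ↔ x * a ∈ Ideal.span {b} := by
  have hbL : (b : L) ≠ 0 := by exact_mod_cast hb
  rw [Ideal.mem_span_singleton']
  constructor
  · intro hx
    refine ⟨⟨_, hx⟩, RingOfIntegers.coe_injective ?_⟩
    show (x : L) * (a / b) * b = x * a
    field_simp
  · rintro ⟨y, hy⟩
    have hyK : (x : L) * ((a : L) / b) = y := by
      rw [← mul_div_assoc, div_eq_iff hbL]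
      exact_mod_cast hy.symm
    show IsIntegral ℤ _
    rw [hyK]
    exact RingOfIntegers.isIntegral_coe y

theorem mulHeight_eq_of_forall_norm_eq_one {α : K} (h : ∀ σ : K →+* ℂ, ‖σ α‖ = 1) :
    mulHeight K α = (Ideal.absNorm (denomIdeal K α) : ℝ) ^ ((Module.finrank ℚ K : ℝ)⁻¹) := by
  simp [mulHeight, h]

theorem Ideal.map_ringEquiv_map_algebraMap_eq {k L : Type*} [Field k] [Field L] [Algebra k L]
    [Algebra (𝓞 k) (𝓞 L)] [IsScalarTower (𝓞 k) (𝓞 L) L] (τ : L ≃ₐ[k] L) (σO : 𝓞 L ≃+* 𝓞 L)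
    (hσO : ∀ x : 𝓞 L, (σO x : L) = τ x) (C : Ideal (𝓞 k)) :
    (C.map (algebraMap (𝓞 k) (𝓞 L))).map (σO : 𝓞 L →+* 𝓞 L) =
      C.map (algebraMap (𝓞 k) (𝓞 L)) := by
  rw [Ideal.map_map]
  congr 1
  ext c
  have hc : ((algebraMap (𝓞 k) (𝓞 L) c : 𝓞 L) : L) = algebraMap k L c :=
    (IsScalarTower.algebraMap_apply (𝓞 k) (𝓞 L) L c).symm.trans
      (IsScalarTower.algebraMap_apply (𝓞 k) k L c)
  rw [RingHom.comp_apply, RingEquiv.coe_toRingHom, hσO, hc, AlgEquiv.commutes]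

theorem stmt9 (k : Type) [Field k]
    [Algebra k K] [Algebra (NumberField.RingOfIntegers k) (𝓞 K)]
    [IsScalarTower (NumberField.RingOfIntegers k) (𝓞 K) K]
    (τ : K ≃ₐ[k] K)
    (σO : 𝓞 K ≃+* 𝓞 K) (hσO : ∀ x : 𝓞 K, ((σO x : K)) = τ (x : K))
    (C : Ideal (NumberField.RingOfIntegers k))
    (B : Ideal (𝓞 K))
    (hcop : IsCoprime B (Ideal.map (σO : 𝓞 K →+* 𝓞 K) B))
    (β : 𝓞 K)
    (hfact : Ideal.span {β} =
      (Ideal.map (algebraMap (NumberField.RingOfIntegers k) (𝓞 K)) C) * B)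
    (harch : ∀ emb : K →+* ℂ, ‖emb ((β : K) / τ (β : K))‖ = 1) :
    mulHeight K ((β : K) / τ (β : K)) =
      (Ideal.absNorm B : ℝ) ^ ((Module.finrank ℚ K : ℝ))⁻¹ := by
  set C' := Ideal.map (algebraMap (NumberField.RingOfIntegers k) (𝓞 K)) C
  have hβ : β ≠ 0 := by
    rintro rfl
    simpa using harch (Classical.arbitrary _)
  have hσOβ : σO β ≠ 0 := σO.map_ne_zero_iff.2 hβ
  have hC' : C' ≠ ⊥ := fun h ↦ hβ (by simpa [h] using hfact)
  have hspan : Ideal.span {σO β} = C' * B.map (σO : 𝓞 K →+* 𝓞 K) := by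
    rw [← Set.image_singleton, ← RingEquiv.coe_toRingHom, ← Ideal.map_span, hfact, Ideal.map_mul,
      Ideal.map_ringEquiv_map_algebraMap_eq τ σO hσO]
  have hden : denomIdeal K ((β : K) / τ (β : K)) = B.map (σO : 𝓞 K →+* 𝓞 K) := by
    ext x
    rw [← hσO β, mem_denomIdeal_div_iff hσOβ,
      Ideal.mul_mem_span_singleton_iff_of_isCoprime hC' hfact hspan hcop.symm]
  rw [mulHeight_eq_of_forall_norm_eq_one K harch, hden, Ideal.absNorm_map_ringEquiv]
end

section
/- Let K/k be a quadratic extension of number fields. Let 𝒫 be the product of the primes of O_K dividing the relative different/discriminant (i.e., the square-free part of the extended ramified primes), and let I_𝒫 be the set of nonzero ideals 𝔅 of O_K coprime to 𝒫 such that no extension A·O_K of a proper nonzero ideal A of O_k divides 𝔅. If A, A' are nonzero ideals of O_k, 𝔇, 𝔇' divide 𝒫, and 𝔅, 𝔅' ∈ I_𝒫, then (A·O_K)·𝔇·𝔅 = (A'·O_K)·𝔇'·𝔅' implies A = A', 𝔇 = 𝔇', and 𝔅 = 𝔅'. -/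
/-!
Compare multiplicities at each ramified prime `𝔭ᵢ`: an extended ideal `A·O_K` contains `𝔭ᵢ` to
an even power (`Pᵢ·O_K = 𝔭ᵢ²`, and no other prime of `O_k` lies under `𝔭ᵢ`), a divisor of `𝒫`
to the power `0` or `1`, and an ideal coprime to `𝒫` not at all, so parity recovers `𝔇` from the
product. After cancelling `𝔇`, write `A = G·A₁`, `A' = G·A₁'` with `G = gcd(A, A')` and `A₁, A₁'`
coprime; cancelling `G·O_K` leaves `A₁·O_K·𝔅 = A₁'·O_K·𝔅'`, so `A₁·O_K ∣ 𝔅'`, which forces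
`A₁ = O_k`, and likewise `A₁' = O_k`.
-/

open NumberField UniqueFactorizationMonoid

namespace Ideal

section Dedekind

variable {S : Type*} [CommRing S] [IsDedekindDomain S]

theorem eq_of_dvd_of_count_normalizedFactors_eq {N X Y : Ideal S} (hN : N ≠ 0)
    (hX : X ∣ N) (hY : Y ∣ N)
    (h : ∀ q ∈ normalizedFactors N,
      (normalizedFactors X).count q = (normalizedFactors Y).count q) :
    X = Y := by
  have hX0 : X ≠ 0 := ne_zero_of_dvd_ne_zero hN hX
  have hY0 : Y ≠ 0 := ne_zero_of_dvd_ne_zero hN hY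
  have hXN := (dvd_iff_normalizedFactors_le_normalizedFactors hX0 hN).mp hX
  have hYN := (dvd_iff_normalizedFactors_le_normalizedFactors hY0 hN).mp hY
  refine associated_iff_eq.mp <|
    (associated_iff_normalizedFactors_eq_normalizedFactors hX0 hY0).mpr <|
      Multiset.ext.mpr fun q ↦ ?_
  by_cases hq : q ∈ normalizedFactors N
  · exact h q hq
  · rw [Multiset.count_eq_zero.mpr (fun hqX ↦ hq (Multiset.mem_of_le hXN hqX)),
      Multiset.count_eq_zero.mpr (fun hqY ↦ hq (Multiset.mem_of_le hYN hqY))]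

theorem count_normalizedFactors_prod_eq_one {ι : Type*} [Fintype ι] {p : ι → Ideal S}
    (hp : ∀ i, Prime (p i)) (hinj : Function.Injective p) (i : ι) :
    (normalizedFactors (∏ j, p j)).count (p i) = 1 := by
  classical
  rw [Finset.prod_eq_multiset_prod, normalizedFactors_prod_of_prime (by simpa using hp),
    Multiset.count_map_eq_count' p _ hinj]
  exact Multiset.count_eq_one_of_mem Finset.univ.nodup (Finset.mem_univ i)

theorem count_normalizedFactors_eq_zero_of_isCoprime {q X N : Ideal S} (hq : Prime q)
    (hqN : q ∣ N) (hX : IsCoprime X N) : (normalizedFactors X).count q = 0 :=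
  Multiset.count_eq_zero.mpr fun hqX ↦
    hq.not_isUnit (hX.isUnit_of_dvd' (dvd_of_mem_normalizedFactors hqX) hqN)

end Dedekind

section Extension

variable {R S : Type*} [CommRing R] [CommRing S] [Algebra R S]

theorem ne_bot_of_map_eq_pow [FaithfulSMul R S] {P : Ideal R} (hPbot : P ≠ ⊥) {𝔭 : Ideal S}
    {e : ℕ} (he : e ≠ 0) (hmap : map (algebraMap R S) P = 𝔭 ^ e) : 𝔭 ≠ ⊥ := by
  rintro rfl
  exact map_ne_bot_of_ne_bot hPbot (by rw [hmap, ← zero_eq_bot, zero_pow he])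

variable [IsDedekindDomain R]

theorem not_dvd_map_of_map_eq_pow {P Q : Ideal R} (hP : P.IsPrime) (hPbot : P ≠ ⊥)
    (hQ : Q.IsPrime) (hQbot : Q ≠ ⊥) (hPQ : P ≠ Q) {𝔭 : Ideal S} (h𝔭 : 𝔭.IsPrime) {e : ℕ}
    (he : e ≠ 0) (hmap : map (algebraMap R S) P = 𝔭 ^ e) :
    ¬ 𝔭 ∣ map (algebraMap R S) Q := by
  intro hdvd
  have hP𝔭 : P ≤ comap (algebraMap R S) 𝔭 := by
    rw [← map_le_iff_le_comap, hmap]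
    exact pow_le_self he
  have hQ𝔭 : Q ≤ comap (algebraMap R S) 𝔭 := map_le_iff_le_comap.mp (le_of_dvd hdvd)
  have hcomap := comap_ne_top (algebraMap R S) h𝔭.ne_top
  exact hPQ (((hP.isMaximal hPbot).eq_of_le hcomap hP𝔭).trans
    ((hQ.isMaximal hQbot).eq_of_le hcomap hQ𝔭).symm)

variable [IsDedekindDomain S] [FaithfulSMul R S]

theorem count_normalizedFactors_map_of_map_eq_pow {P : Ideal R} (hP : P.IsPrime)
    (hPbot : P ≠ ⊥) {𝔭 : Ideal S} (h𝔭 : 𝔭.IsPrime) {e : ℕ} (he : e ≠ 0)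
    (hmap : map (algebraMap R S) P = 𝔭 ^ e) {I : Ideal R} (hI : I ≠ ⊥) :
    (normalizedFactors (map (algebraMap R S) I)).count 𝔭 =
      e * (normalizedFactors I).count P := by
  classical
  have h𝔭prime := prime_of_isPrime (ne_bot_of_map_eq_pow hPbot he hmap) h𝔭
  induction I using induction_on_prime with
  | h₁ => exact absurd rfl hI
  | h₂ u hu =>
    rw [isUnit_iff.mp hu, map_top, ← one_eq_top, ← one_eq_top, normalizedFactors_one,
      normalizedFactors_one, Multiset.count_zero, Multiset.count_zero, mul_zero]
  | h₃ J Q hJ hQ ih =>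
    have hQbot : Q ≠ ⊥ := hQ.ne_zero
    rw [Ideal.map_mul, normalizedFactors_mul (map_ne_bot_of_ne_bot hQbot)
      (map_ne_bot_of_ne_bot hJ), normalizedFactors_mul hQ.ne_zero hJ, Multiset.count_add,
      Multiset.count_add, ih hJ, mul_add, normalizedFactors_irreducible hQ.irreducible,
      normalize_eq, Multiset.count_singleton]
    congr 1
    by_cases hPQ : P = Q
    · subst hPQ
      rw [hmap, normalizedFactors_pow, normalizedFactors_irreducible h𝔭prime.irreducible,
        normalize_eq, Multiset.count_nsmul, Multiset.count_singleton_self, if_pos rfl]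
    · rw [if_neg hPQ, mul_zero, Multiset.count_eq_zero.mpr fun h ↦
        not_dvd_map_of_map_eq_pow hP hPbot (isPrime_of_prime hQ) hQbot hPQ h𝔭 he hmap
          (dvd_of_mem_normalizedFactors h)]

theorem eq_and_eq_of_map_mul_eq_map_mul {A A' : Ideal R} {B B' : Ideal S} (hA : A ≠ ⊥)
    (hA' : A' ≠ ⊥)
    (hB : ∀ A₀ : Ideal R, A₀ ≠ ⊥ → A₀ ≠ ⊤ → ¬ map (algebraMap R S) A₀ ∣ B)
    (hB' : ∀ A₀ : Ideal R, A₀ ≠ ⊥ → A₀ ≠ ⊤ → ¬ map (algebraMap R S) A₀ ∣ B')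
    (h : map (algebraMap R S) A * B = map (algebraMap R S) A' * B') : A = A' ∧ B = B' := by
  obtain ⟨A₁, A₁', hA₁, hA₁', hunit⟩ := extract_gcd A A'
  have hG : gcd A A' ≠ ⊥ := fun hG ↦ hA (by rw [hA₁, hG, bot_mul])
  have hcop : IsCoprime (map (algebraMap R S) A₁) (map (algebraMap R S) A₁') := by
    rw [isCoprime_iff_sup_eq, ← map_sup, ← gcd_eq_sup, isUnit_iff.mp hunit, map_top]
  have h₁ : map (algebraMap R S) A₁ * B = map (algebraMap R S) A₁' * B' := by
    refine mul_left_cancel₀ (map_ne_bot_of_ne_bot hG) ?_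
    rw [← mul_assoc, ← mul_assoc, ← Ideal.map_mul, ← Ideal.map_mul, ← hA₁, ← hA₁', h]
  have hA₁top : A₁ = ⊤ := by
    by_contra hne
    refine hB' A₁ (fun hbot ↦ hA (by rw [hA₁, hbot, mul_bot])) hne ?_
    exact hcop.dvd_of_dvd_mul_left ⟨B, h₁.symm⟩
  have hA₁'top : A₁' = ⊤ := by
    by_contra hne
    refine hB A₁' (fun hbot ↦ hA' (by rw [hA₁', hbot, mul_bot])) hne ?_
    exact hcop.symm.dvd_of_dvd_mul_left ⟨B', h₁⟩
  rw [hA₁top, hA₁'top, map_top, top_mul, top_mul] at h₁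
  rw [hA₁top, mul_top] at hA₁
  rw [hA₁'top, mul_top] at hA₁'
  exact ⟨hA₁.trans hA₁'.symm, h₁⟩

theorem eq_of_map_mul_mul_eq_map_mul_mul {ι : Type*} [Fintype ι] {P : ι → Ideal R}
    {p : ι → Ideal S} (hP : ∀ i, (P i).IsPrime) (hPbot : ∀ i, P i ≠ ⊥) (hp : ∀ i, (p i).IsPrime)
    (hpinj : Function.Injective p) (hram : ∀ i, map (algebraMap R S) (P i) = p i ^ 2)
    {A A' : Ideal R} {D D' B B' : Ideal S} (hA : A ≠ ⊥) (hA' : A' ≠ ⊥)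
    (hD : D ∣ ∏ i, p i) (hD' : D' ∣ ∏ i, p i) (hB : B ≠ ⊥) (hB' : B' ≠ ⊥)
    (hBcop : IsCoprime B (∏ i, p i)) (hB'cop : IsCoprime B' (∏ i, p i))
    (h : map (algebraMap R S) A * D * B = map (algebraMap R S) A' * D' * B') : D = D' := by
  have hpbot i : p i ≠ ⊥ := ne_bot_of_map_eq_pow (hPbot i) two_ne_zero (hram i)
  have hprime i : Prime (p i) := prime_of_isPrime (hpbot i) (hp i)
  have hN : (∏ i, p i) ≠ 0 := Finset.prod_ne_zero_iff.mpr fun i _ ↦ hpbot i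
  refine eq_of_dvd_of_count_normalizedFactors_eq hN hD hD' fun q hq ↦ ?_
  have hqprime := prime_of_normalized_factor q hq
  obtain ⟨i, -, hqi⟩ := hqprime.exists_mem_finset_dvd (dvd_of_mem_normalizedFactors hq)
  obtain rfl := associated_iff_eq.mp (hqprime.associated_of_dvd (hprime i) hqi)
  have hle {X : Ideal S} (hX : X ∣ ∏ i, p i) : (normalizedFactors X).count (p i) ≤ 1 :=
    count_normalizedFactors_prod_eq_one hprime hpinj i ▸ Multiset.le_iff_count.mp
      ((dvd_iff_normalizedFactors_le_normalizedFactors (ne_zero_of_dvd_ne_zero hN hX) hN).mp hX) _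
  have hpN : p i ∣ ∏ i, p i := Finset.dvd_prod_of_mem p (Finset.mem_univ i)
  have hD0 := ne_zero_of_dvd_ne_zero hN hD
  have hD'0 := ne_zero_of_dvd_ne_zero hN hD'
  have hcount := congrArg (fun I ↦ (normalizedFactors I).count (p i)) h
  simp only [normalizedFactors_mul (mul_ne_zero (map_ne_bot_of_ne_bot hA) hD0) hB,
    normalizedFactors_mul (mul_ne_zero (map_ne_bot_of_ne_bot hA') hD'0) hB',
    normalizedFactors_mul (map_ne_bot_of_ne_bot hA) hD0,
    normalizedFactors_mul (map_ne_bot_of_ne_bot hA') hD'0, Multiset.count_add,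
    count_normalizedFactors_map_of_map_eq_pow (hP i) (hPbot i) (hp i) two_ne_zero (hram i) hA,
    count_normalizedFactors_map_of_map_eq_pow (hP i) (hPbot i) (hp i) two_ne_zero (hram i) hA',
    count_normalizedFactors_eq_zero_of_isCoprime (hprime i) hpN hBcop,
    count_normalizedFactors_eq_zero_of_isCoprime (hprime i) hpN hB'cop] at hcount
  have := hle hD
  have := hle hD'
  omega

end Extension

end Ideal

theorem stmt12_general (k K : Type) [Field k] [NumberField k] [Field K] [NumberField K]
    [Algebra k K] [Algebra (𝓞 k) (𝓞 K)] [IsScalarTower (𝓞 k) (𝓞 K) K]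
    (s : ℕ) (P : Fin s → Ideal (𝓞 k)) (p : Fin s → Ideal (𝓞 K))
    (hP : ∀ i, (P i).IsPrime) (hPbot : ∀ i, P i ≠ ⊥)
    (hp : ∀ i, (p i).IsPrime) (hpinj : Function.Injective p)
    (hram : ∀ i, Ideal.map (algebraMap (𝓞 k) (𝓞 K)) (P i) = p i ^ 2)
    (A A' : Ideal (𝓞 k)) (hA : A ≠ ⊥) (hA' : A' ≠ ⊥)
    (D D' : Ideal (𝓞 K)) (hD : D ∣ ∏ i, p i) (hD' : D' ∣ ∏ i, p i)
    (B B' : Ideal (𝓞 K))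
    (hB : B ≠ ⊥ ∧ IsCoprime B (∏ i, p i) ∧
      ∀ A₀ : Ideal (𝓞 k), A₀ ≠ ⊥ → A₀ ≠ ⊤ →
        ¬ Ideal.map (algebraMap (𝓞 k) (𝓞 K)) A₀ ∣ B)
    (hB' : B' ≠ ⊥ ∧ IsCoprime B' (∏ i, p i) ∧
      ∀ A₀ : Ideal (𝓞 k), A₀ ≠ ⊥ → A₀ ≠ ⊤ →
        ¬ Ideal.map (algebraMap (𝓞 k) (𝓞 K)) A₀ ∣ B')
    (heq : Ideal.map (algebraMap (𝓞 k) (𝓞 K)) A * D * B =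
      Ideal.map (algebraMap (𝓞 k) (𝓞 K)) A' * D' * B') :
    A = A' ∧ D = D' ∧ B = B' := by
  obtain ⟨hB0, hBcop, hBext⟩ := hB
  obtain ⟨hB'0, hB'cop, hB'ext⟩ := hB'
  have : FaithfulSMul (𝓞 k) (𝓞 K) := FaithfulSMul.tower_bot (𝓞 k) (𝓞 K) K
  obtain rfl : D = D' := Ideal.eq_of_map_mul_mul_eq_map_mul_mul hP hPbot hp hpinj hram hA hA'
    hD hD' hB0 hB'0 hBcop hB'cop heq
  have hD0 : D ≠ 0 := ne_zero_of_dvd_ne_zero (Finset.prod_ne_zero_iff.mpr fun i _ ↦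
    Ideal.ne_bot_of_map_eq_pow (hPbot i) two_ne_zero (hram i)) hD
  have hAB : Ideal.map (algebraMap (𝓞 k) (𝓞 K)) A * B =
      Ideal.map (algebraMap (𝓞 k) (𝓞 K)) A' * B' :=
    mul_left_cancel₀ hD0 (by convert heq using 1 <;> ring)
  obtain ⟨rfl, rfl⟩ := Ideal.eq_and_eq_of_map_mul_eq_map_mul hA hA' hBext hB'ext hAB
  exact ⟨rfl, rfl, rfl⟩

/-- Unique decomposition (Lemma on `I_𝒫`).  Let `K/k` be a quadratic extension of number
fields, let `P₁,…,P_s` be the primes of `O_k` ramifying in `K` with `P_i·O_K = 𝔭_i²`, and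
let `𝒫 = 𝔭₁⋯𝔭_s`.  If `A, A'` are nonzero ideals of `O_k`, `𝔇, 𝔇'` divide `𝒫`, and
`𝔅, 𝔅'` lie in `I_𝒫` (nonzero, coprime to `𝒫`, with no extension `A·O_K` of a proper
nonzero ideal of `O_k` dividing them), then `(A·O_K)·𝔇·𝔅 = (A'·O_K)·𝔇'·𝔅'` implies
`A = A'`, `𝔇 = 𝔇'` and `𝔅 = 𝔅'`. -/
theorem stmt12 (k K : Type) [Field k] [NumberField k] [Field K] [NumberField K]
    [Algebra k K] [Algebra (𝓞 k) (𝓞 K)] [IsScalarTower (𝓞 k) (𝓞 K) K]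
    (hdeg : Module.finrank k K = 2)
    (s : ℕ) (P : Fin s → Ideal (𝓞 k)) (p : Fin s → Ideal (𝓞 K))
    (hP : ∀ i, (P i).IsPrime) (hPbot : ∀ i, P i ≠ ⊥)
    (hp : ∀ i, (p i).IsPrime) (hpinj : Function.Injective p)
    (hram : ∀ i, Ideal.map (algebraMap (𝓞 k) (𝓞 K)) (P i) = p i ^ 2)
    (A A' : Ideal (𝓞 k)) (hA : A ≠ ⊥) (hA' : A' ≠ ⊥)
    (D D' : Ideal (𝓞 K)) (hD : D ∣ ∏ i, p i) (hD' : D' ∣ ∏ i, p i)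
    (B B' : Ideal (𝓞 K))
    (hB : B ≠ ⊥ ∧ IsCoprime B (∏ i, p i) ∧
      ∀ A₀ : Ideal (𝓞 k), A₀ ≠ ⊥ → A₀ ≠ ⊤ →
        ¬ Ideal.map (algebraMap (𝓞 k) (𝓞 K)) A₀ ∣ B)
    (hB' : B' ≠ ⊥ ∧ IsCoprime B' (∏ i, p i) ∧
      ∀ A₀ : Ideal (𝓞 k), A₀ ≠ ⊥ → A₀ ≠ ⊤ →
        ¬ Ideal.map (algebraMap (𝓞 k) (𝓞 K)) A₀ ∣ B')
    (heq : Ideal.map (algebraMap (𝓞 k) (𝓞 K)) A * D * B =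
      Ideal.map (algebraMap (𝓞 k) (𝓞 K)) A' * D' * B') :
    A = A' ∧ D = D' ∧ B = B' :=
  stmt12_general k K s P p hP hPbot hp hpinj hram A A' hA hA' D D' hD hD' B B' hB hB' heq
end
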